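/- (Lemma 3.2) The set of vectors (x1, x2, x3, X11, X22, X33, X12, X13, X23) ∈ ℝ⁹ such that (x, X) ∈ QPB₃ and 4·x1 + 4·X11 − 8·X12 − 4·X13 + X22 + 3·X23 = 0 has affine dimension exactly 4; that is, the direction of the affine span of this set is a linear subspace of ℝ⁹ of dimension 4. -/

import Mathlib

/-- The unit box in ℝ³. -/
def Box3 : Set (Fin 3 → ℝ) := {x | ∀ i, 0 ≤ x i ∧ x i ≤ 1}

/-- `QPB₃`: the convex hull of the rank-one lifted points of the unit box, in the space of
pairs `(x, X)` where `X` is a `3 × 3` real matrix. -/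
noncomputable def QPB3 : Set ((Fin 3 → ℝ) × Matrix (Fin 3) (Fin 3) ℝ) :=
  convexHull ℝ {p | ∃ x ∈ Box3, p = (x, Matrix.of fun i j => x i * x j)}

/-- The points of `QPB₃`, viewed as vectors
`(x1, x2, x3, X11, X22, X33, X12, X13, X23) ∈ ℝ⁹`, on which the constraint
`4·x1 + 4·X11 − 8·X12 − 4·X13 + X22 + 3·X23 ≥ 0` is tight. -/
noncomputable def tightFace : Set (Fin 9 → ℝ) :=
  {v | ∃ p ∈ QPB3,
    v = ![p.1 0, p.1 1, p.1 2, p.2 0 0, p.2 1 1, p.2 2 2, p.2 0 1, p.2 0 2, p.2 1 2] ∧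
    4 * p.1 0 + 4 * p.2 0 0 - 8 * p.2 0 1 - 4 * p.2 0 2 + p.2 1 1 + 3 * p.2 1 2 = 0}

/-!
On the lifted box, the constraint is the quadratic
`q(a,b,c) = 4a + 4a² - 8ab - 4ac + b² + 3bc`, which on `[0,1]³` is a sum of nonnegative terms:
`(2a-b)² + 4a(1-b) + c(3b-4a)` when `4a ≤ 3b`, and `4(a-b)² + 3b(1-b) + (1-c)(4a-3b)` otherwise.
Hence the constraint is valid on `QPB₃`, and a point of `QPB₃` where it is tight is a convex
combination of lifted zeros of `q`. These zeros are the segment `a = b = 0` and the points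
`(1/2,1,0)`, `(1,1,1)`; their lifts span the same space as the lifts of
`(0,0,1), (0,0,1/2), (1/2,1,0), (1,1,1)`, four linearly independent points of the face.
As the face contains `0`, the direction of its affine span is this four-dimensional space.
-/

lemma mem_span_setOf_eq_zero_of_mem_convexHull {𝕜 E : Type*} [Field 𝕜] [LinearOrder 𝕜]
    [IsStrictOrderedRing 𝕜] [AddCommGroup E] [Module 𝕜 E] {s : Set E} (ℓ : E →ₗ[𝕜] 𝕜)
    (hs : ∀ x ∈ s, 0 ≤ ℓ x) {p : E} (hp : p ∈ convexHull 𝕜 s) (hℓp : ℓ p = 0) :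
    p ∈ Submodule.span 𝕜 {x ∈ s | ℓ x = 0} := by
  obtain ⟨ι, _, w, z, hw, -, hz, rfl⟩ := mem_convexHull_iff_exists_fintype.mp hp
  have hterms : ∀ i, w i * ℓ (z i) = 0 := by
    simp only [map_sum, map_smul, smul_eq_mul] at hℓp
    simpa using (Finset.sum_eq_zero_iff_of_nonneg fun i _ => mul_nonneg (hw i) (hs _ (hz i))).1 hℓp
  refine Submodule.sum_mem _ fun i _ => ?_
  rcases mul_eq_zero.1 (hterms i) with h | h
  · simp [h]
  · exact Submodule.smul_mem _ _ (Submodule.subset_span ⟨hz i, h⟩)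

lemma vectorSpan_eq_span_of_zero_mem {k E : Type*} [Ring k] [AddCommGroup E] [Module k E]
    {s : Set E} (hs : (0 : E) ∈ s) : vectorSpan k s = Submodule.span k s := by
  simp [vectorSpan_eq_span_vsub_set_right k hs]

def tightQuad (a b c : ℝ) : ℝ := 4 * a + 4 * a ^ 2 - 8 * a * b - 4 * a * c + b ^ 2 + 3 * b * c

lemma tightQuad_eq_left (a b c : ℝ) :
    tightQuad a b c = (2 * a - b) ^ 2 + 4 * (a * (1 - b)) + c * (3 * b - 4 * a) := by
  unfold tightQuad; ring

lemma tightQuad_eq_right (a b c : ℝ) :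
    tightQuad a b c = 4 * (a - b) ^ 2 + 3 * (b * (1 - b)) + (1 - c) * (4 * a - 3 * b) := by
  unfold tightQuad; ring

lemma tightQuad_nonneg {a b c : ℝ} (ha : 0 ≤ a) (hb₀ : 0 ≤ b) (hb₁ : b ≤ 1) (hc₀ : 0 ≤ c)
    (hc₁ : c ≤ 1) : 0 ≤ tightQuad a b c := by
  rcases le_total (4 * a) (3 * b) with h | h
  · rw [tightQuad_eq_left]
    have := mul_nonneg ha (sub_nonneg.2 hb₁)
    have := mul_nonneg hc₀ (sub_nonneg.2 h)
    positivity
  · rw [tightQuad_eq_right]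
    have := mul_nonneg hb₀ (sub_nonneg.2 hb₁)
    have := mul_nonneg (sub_nonneg.2 hc₁) (sub_nonneg.2 h)
    positivity

lemma tightQuad_eq_zero {a b c : ℝ} (ha : 0 ≤ a) (hb₀ : 0 ≤ b) (hb₁ : b ≤ 1) (hc₀ : 0 ≤ c)
    (hc₁ : c ≤ 1) (h : tightQuad a b c = 0) :
    (a = 0 ∧ b = 0) ∨ (a = 1 / 2 ∧ b = 1 ∧ c = 0) ∨ (a = 1 ∧ b = 1 ∧ c = 1) := by
  rcases le_total (4 * a) (3 * b) with hab | hab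
  · rw [tightQuad_eq_left] at h
    have h₁ := mul_nonneg ha (sub_nonneg.2 hb₁)
    have h₂ := mul_nonneg hc₀ (sub_nonneg.2 hab)
    have hsq : (2 * a - b) ^ 2 = 0 := by linarith [sq_nonneg (2 * a - b)]
    have hb : b = 2 * a := by linarith [pow_eq_zero_iff two_ne_zero |>.1 hsq]
    rcases mul_eq_zero.1 (show a * (1 - b) = 0 by linarith [sq_nonneg (2 * a - b)]) with h0 | h1
    · left; constructor <;> linarith
    · have hc : c * (3 * b - 4 * a) = 0 := by linarith [sq_nonneg (2 * a - b)]
      right; left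
      refine ⟨by linarith, by linarith, ?_⟩
      rcases mul_eq_zero.1 hc with hc | hc
      · exact hc
      · linarith
  · rw [tightQuad_eq_right] at h
    have h₁ := mul_nonneg hb₀ (sub_nonneg.2 hb₁)
    have h₂ := mul_nonneg (sub_nonneg.2 hc₁) (sub_nonneg.2 hab)
    have hsq : (a - b) ^ 2 = 0 := by linarith [sq_nonneg (a - b)]
    have ha : a = b := by linarith [pow_eq_zero_iff two_ne_zero |>.1 hsq]
    rcases mul_eq_zero.1 (show b * (1 - b) = 0 by linarith [sq_nonneg (a - b)]) with h0 | h1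
    · left; constructor <;> linarith
    · have hc : (1 - c) * (4 * a - 3 * b) = 0 := by linarith [sq_nonneg (a - b)]
      right; right
      refine ⟨by linarith, by linarith, ?_⟩
      rcases mul_eq_zero.1 hc with hc | hc <;> linarith

def pairCoords : ((Fin 3 → ℝ) × Matrix (Fin 3) (Fin 3) ℝ) →ₗ[ℝ] (Fin 9 → ℝ) where
  toFun p := ![p.1 0, p.1 1, p.1 2, p.2 0 0, p.2 1 1, p.2 2 2, p.2 0 1, p.2 0 2, p.2 1 2]
  map_add' p q := by funext i; fin_cases i <;> rfl
  map_smul' r p := by funext i; fin_cases i <;> rfl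

def tightFunctional : (Fin 9 → ℝ) →ₗ[ℝ] ℝ where
  toFun v := 4 * v 0 + 4 * v 3 - 8 * v 6 - 4 * v 7 + v 4 + 3 * v 8
  map_add' v w := by simp only [Pi.add_apply]; ring
  map_smul' r v := by simp only [Pi.smul_apply, smul_eq_mul, RingHom.id_apply]; ring

def liftVec (x : Fin 3 → ℝ) : Fin 9 → ℝ := pairCoords (x, Matrix.of fun i j => x i * x j)

lemma liftVec_apply (x : Fin 3 → ℝ) : liftVec x =
    ![x 0, x 1, x 2, x 0 * x 0, x 1 * x 1, x 2 * x 2, x 0 * x 1, x 0 * x 2, x 1 * x 2] :=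
  rfl

lemma tightFunctional_liftVec (x : Fin 3 → ℝ) :
    tightFunctional (liftVec x) = tightQuad (x 0) (x 1) (x 2) := by
  simp only [tightFunctional, LinearMap.coe_mk, AddHom.coe_mk, liftVec_apply, Matrix.cons_val,
    tightQuad]
  ring

lemma tightFace_subset_convexHull_inter :
    tightFace ⊆ convexHull ℝ (liftVec '' Box3) ∩ {v | tightFunctional v = 0} := by
  rintro v ⟨p, hp, rfl, hp₀⟩
  refine ⟨?_, hp₀⟩
  have : pairCoords '' {p : (Fin 3 → ℝ) × Matrix (Fin 3) (Fin 3) ℝ |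
      ∃ x ∈ Box3, p = (x, Matrix.of fun i j => x i * x j)} = liftVec '' Box3 := by
    ext v; simp [liftVec, eq_comm]
  rw [← this, ← LinearMap.image_convexHull]
  exact Set.mem_image_of_mem _ hp

lemma liftVec_mem_tightFace {x : Fin 3 → ℝ} (hx : x ∈ Box3)
    (h : tightQuad (x 0) (x 1) (x 2) = 0) : liftVec x ∈ tightFace :=
  ⟨(x, Matrix.of fun i j => x i * x j), subset_convexHull ℝ _ ⟨x, hx, rfl⟩, rfl,
    (tightFunctional_liftVec x).trans h⟩

noncomputable def tightVertex : Fin 4 → Fin 3 → ℝ :=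
  ![![0, 0, 1], ![0, 0, 1 / 2], ![1 / 2, 1, 0], ![1, 1, 1]]

lemma tightVertex_mem_box (i : Fin 4) : tightVertex i ∈ Box3 := by
  intro j; fin_cases i <;> fin_cases j <;> norm_num [tightVertex]

lemma tightQuad_tightVertex (i : Fin 4) :
    tightQuad (tightVertex i 0) (tightVertex i 1) (tightVertex i 2) = 0 := by
  fin_cases i <;> norm_num [tightVertex, tightQuad, Matrix.cons_val_two]

lemma linearIndependent_liftVec_tightVertex :
    LinearIndependent ℝ (fun i => liftVec (tightVertex i)) := by
  rw [Fintype.linearIndependent_iff]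
  intro g hg
  have h1 := congrFun hg 1
  have h2 := congrFun hg 2
  have h5 := congrFun hg 5
  have h7 := congrFun hg 7
  simp only [Fin.sum_univ_four, Finset.sum_apply, Pi.smul_apply, smul_eq_mul, liftVec_apply,
    tightVertex, Matrix.cons_val, Pi.zero_apply] at h1 h2 h5 h7
  intro i
  fin_cases i <;> simp only [Fin.zero_eta, Fin.mk_one, Fin.reduceFinMk] <;> linarith

lemma liftVec_mem_span_tightVertex {x : Fin 3 → ℝ} (hx : x ∈ Box3)
    (h : tightQuad (x 0) (x 1) (x 2) = 0) :
    liftVec x ∈ Submodule.span ℝ (Set.range fun i => liftVec (tightVertex i)) := by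
  have mem (i : Fin 4) := Submodule.subset_span (R := ℝ)
    (Set.mem_range_self (f := fun i => liftVec (tightVertex i)) i)
  rcases tightQuad_eq_zero (hx 0).1 (hx 1).1 (hx 1).2 (hx 2).1 (hx 2).2 h with
    ⟨h0, h1⟩ | ⟨h0, h1, h2⟩ | ⟨h0, h1, h2⟩
  · -- `(c, c²) = (2c² - c) • (1, 1) + 4(c - c²) • (1/2, 1/4)` in the coordinates `x₃, X₃₃`
    have : liftVec x = (2 * x 2 ^ 2 - x 2) • liftVec (tightVertex 0)
        + (4 * (x 2 - x 2 ^ 2)) • liftVec (tightVertex 1) := by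
      funext k; fin_cases k <;>
        simp only [Fin.reduceFinMk, Fin.zero_eta, Fin.mk_one, liftVec_apply, tightVertex,
          Matrix.cons_val, Pi.add_apply, Pi.smul_apply, smul_eq_mul, h0, h1] <;> ring
    rw [this]
    exact add_mem (Submodule.smul_mem _ _ (mem 0)) (Submodule.smul_mem _ _ (mem 1))
  · obtain rfl : x = tightVertex 2 := by
      funext k; fin_cases k <;> simp [tightVertex, h0, h1, h2]
    exact mem 2
  · obtain rfl : x = tightVertex 3 := by
      funext k; fin_cases k <;> simp [tightVertex, h0, h1, h2]
    exact mem 3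

lemma span_tightFace : Submodule.span ℝ tightFace =
    Submodule.span ℝ (Set.range fun i => liftVec (tightVertex i)) := by
  refine le_antisymm (Submodule.span_le.2 fun v hv => ?_) (Submodule.span_mono ?_)
  · obtain ⟨hv, hv₀⟩ := tightFace_subset_convexHull_inter hv
    have := mem_span_setOf_eq_zero_of_mem_convexHull tightFunctional ?_ hv hv₀
    · refine Submodule.span_le.2 ?_ this
      rintro _ ⟨⟨x, hx, rfl⟩, h⟩
      exact liftVec_mem_span_tightVertex hx ((tightFunctional_liftVec x).symm.trans h)
    · rintro _ ⟨x, hx, rfl⟩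
      rw [tightFunctional_liftVec]
      exact tightQuad_nonneg (hx 0).1 (hx 1).1 (hx 1).2 (hx 2).1 (hx 2).2
  · rintro _ ⟨i, rfl⟩
    exact liftVec_mem_tightFace (tightVertex_mem_box i) (tightQuad_tightVertex i)

lemma zero_mem_tightFace : (0 : Fin 9 → ℝ) ∈ tightFace := by
  have h0 : liftVec 0 = 0 := by funext k; fin_cases k <;> simp [liftVec_apply]
  simpa [h0] using
    liftVec_mem_tightFace (x := 0) (fun _ => ⟨le_rfl, zero_le_one⟩) (by simp [tightQuad])

/-- The face of `QPB₃` on which the constraint is tight has affine dimension exactly 4. -/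
theorem tightFace_dim :
    Module.finrank ℝ (affineSpan ℝ tightFace).direction = 4 := by
  rw [direction_affineSpan, vectorSpan_eq_span_of_zero_mem zero_mem_tightFace, span_tightFace,
    finrank_span_eq_card linearIndependent_liftVec_tightVertex, Fintype.card_fin]
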